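/- Let T = (V,E) be a tree with at least 4 nodes, and let u, v ∈ V with d(u,v) ≥ 3. Denote by ū = the first internal node on the u–v path after u, and v̄ = the first internal node before v. Then the intersection inequality x_{uv} + x_{ū v̄} ≤ x_{u v̄} + x_{ū v} is valid for LMC(T): every characteristic vector of a multicut of K_V lifted from T satisfies it. -/

import Mathlib

open Finset

open scoped Classical

variable {V : Type*}

/-- A decomposition of a graph `G`: a partition of the node set all of whose blocks
induce connected subgraphs. -/
def IsDecomposition (G : SimpleGraph V) (P : Set (Set V)) : Prop :=
  Setoid.IsPartition P ∧ ∀ U ∈ P, (G.induce U).Connected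

/-- Two nodes lie in a common block of `P`. -/
def SameBlock (P : Set (Set V)) (u v : V) : Prop :=
  ∃ U ∈ P, u ∈ U ∧ v ∈ U

/-- The edge `e` straddles two distinct blocks of `P`. -/
def Crosses (P : Set (Set V)) (e : Sym2 V) : Prop :=
  ∃ u v, e = s(u, v) ∧ ¬ SameBlock P u v

/-- The multicut of `G` induced by a decomposition `P`. -/
def inducedMulticut (G : SimpleGraph V) (P : Set (Set V)) : Set (Sym2 V) :=
  {e | e ∈ G.edgeSet ∧ Crosses P e}

/-- `M` is a multicut of `G`. -/
def IsMulticut (G : SimpleGraph V) (M : Set (Sym2 V)) : Prop :=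
  ∃ P, IsDecomposition G P ∧ M = inducedMulticut G P

/-- The characteristic vector (in the ambient space `Sym2 V → ℝ`, with coordinates
outside the edge set of `H` pinned to `0`) of the multicut of `H` induced by `P`. -/
noncomputable def multicutVec (H : SimpleGraph V) (P : Set (Set V)) : Sym2 V → ℝ :=
  fun e => if e ∈ H.edgeSet ∧ Crosses P e then 1 else 0

/-- Characteristic vectors of multicuts of `H` lifted from `G`. -/
def liftedVectors (G H : SimpleGraph V) : Set (Sym2 V → ℝ) :=
  {x | ∃ P, IsDecomposition G P ∧ x = multicutVec H P}

/-- The lifted multicut polytope with respect to `G` and `H`. -/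
def LMC (G H : SimpleGraph V) : Set (Sym2 V → ℝ) :=
  convexHull ℝ (liftedVectors G H)

/-- The inequality `f x ≤ b` is valid for `P` and its equality set has affine dimension
`|E ∪ F| - 1`, i.e. one less than the dimension of the corresponding lifted multicut
polytope for the augmented graph `H`. -/
def DefinesFacet (H : SimpleGraph V) (P : Set (Sym2 V → ℝ))
    (f : (Sym2 V → ℝ) → ℝ) (b : ℝ) : Prop :=
  (∀ x ∈ P, f x ≤ b) ∧
  Module.finrank ℝ (affineSpan ℝ {x | x ∈ P ∧ f x = b}).direction + 1 = Nat.card H.edgeSet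

/-! In a tree, the unique path between two nodes of a connected block stays inside the block.
Hence if `u` and `v̄` share a block, so does `ū`, which lies on the `u`–`v̄` path; symmetrically
for `ū` and `v`. Reading the four coordinates as cut indicators, these implications leave no room
for `x_{uv} + x_{ū v̄}` to exceed `x_{u v̄} + x_{ū v}`. -/

namespace SameBlock

variable {P : Set (Set V)} {a b c : V}

lemma symm (h : SameBlock P a b) : SameBlock P b a := by
  obtain ⟨U, hU, ha, hb⟩ := h
  exact ⟨U, hU, hb, ha⟩

lemma refl (hP : Setoid.IsPartition P) (a : V) : SameBlock P a a := by
  obtain ⟨U, ⟨hU, ha⟩, -⟩ := hP.2 a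
  exact ⟨U, hU, ha, ha⟩

lemma trans (hP : Setoid.IsPartition P) (hab : SameBlock P a b) (hbc : SameBlock P b c) :
    SameBlock P a c := by
  obtain ⟨U, hU, ha, hbU⟩ := hab
  obtain ⟨W, hW, hbW, hc⟩ := hbc
  obtain ⟨B, -, hB⟩ := hP.2 b
  have hUW : U = W := (hB U ⟨hU, hbU⟩).trans (hB W ⟨hW, hbW⟩).symm
  exact ⟨U, hU, ha, hUW ▸ hc⟩

end SameBlock

lemma crosses_mk_iff {P : Set (Set V)} {a b : V} :
    Crosses P s(a, b) ↔ ¬ SameBlock P a b := by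
  constructor
  · rintro ⟨c, d, he, hcd⟩
    rcases Sym2.eq_iff.mp he with ⟨rfl, rfl⟩ | ⟨rfl, rfl⟩
    · exact hcd
    · exact fun h => hcd h.symm
  · exact fun h => ⟨a, b, rfl, h⟩

lemma multicutVec_top_mk {P : Set (Set V)} (hP : Setoid.IsPartition P) (a b : V) :
    multicutVec ⊤ P s(a, b) = if SameBlock P a b then 0 else 1 := by
  by_cases hab : a = b
  · subst hab
    simp [multicutVec, SameBlock.refl hP a]
  · simp [multicutVec, crosses_mk_iff, hab]

lemma IsDecomposition.support_subset_of_isPath {G : SimpleGraph V} (hG : G.IsAcyclic)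
    {P : Set (Set V)} (hP : IsDecomposition G P) {U : Set V} (hU : U ∈ P) {a b : V}
    (ha : a ∈ U) (hb : b ∈ U) {q : G.Walk a b} (hq : q.IsPath) {w : V} (hw : w ∈ q.support) :
    w ∈ U := by
  obtain ⟨r⟩ := (hP.2 U hU).preconnected ⟨a, ha⟩ ⟨b, hb⟩
  let f : G.induce U →g G := (SimpleGraph.Embedding.induce U).toHom
  have hq_eq : q = (r.map f).bypass :=
    congrArg Subtype.val ((hG.subsingleton_path a b).elim ⟨q, hq⟩ ⟨_, (r.map f).bypass_isPath⟩)
  have hw' : w ∈ (r.map f).support := (r.map f).support_bypass_subset_support (hq_eq ▸ hw)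
  rw [SimpleGraph.Walk.support_map] at hw'
  obtain ⟨⟨w, hwU⟩, -, rfl⟩ := List.mem_map.mp hw'
  exact hwU

lemma IsDecomposition.sameBlock_of_mem_support {G : SimpleGraph V} (hG : G.IsAcyclic)
    {P : Set (Set V)} (hP : IsDecomposition G P) {a b w : V} {q : G.Walk a b} (hq : q.IsPath)
    (hw : w ∈ q.support) (hab : SameBlock P a b) : SameBlock P a w ∧ SameBlock P w b := by
  obtain ⟨U, hU, ha, hb⟩ := hab
  have hwU := hP.support_subset_of_isPath hG hU ha hb hq hw
  exact ⟨⟨U, hU, ha, hwU⟩, ⟨U, hU, hwU, hb⟩⟩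

lemma ite_add_ite_le_ite_add_ite {A B C D : Prop} [Decidable A] [Decidable B] [Decidable C]
    [Decidable D] (hCB : C → B) (hDB : D → B) (hCDA : C → D → A) :
    ((if A then 0 else 1) : ℝ) + (if B then 0 else 1) ≤ (if C then 0 else 1) + (if D then 0 else 1) := by
  split_ifs <;> simp_all

theorem tree_intersection_inequality_valid_general
    {V : Type*} (G : SimpleGraph V) (hT : G.IsTree)
    (u ub vb v : V)
    (h1 : G.Adj u ub) (h2 : G.Adj vb v)
    (p : G.Walk ub vb)
    (hp : ((SimpleGraph.Walk.cons h1 p).concat h2).IsPath) :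
    ∀ x ∈ liftedVectors G ⊤,
      x s(u, v) + x s(ub, vb) ≤ x s(u, vb) + x s(ub, v) := by
  rintro x ⟨P, hP, rfl⟩
  have hpath_u : (SimpleGraph.Walk.cons h1 p).IsPath := by
    rw [SimpleGraph.Walk.concat_eq_append] at hp
    exact hp.of_append_left
  have hpath_ub : (p.concat h2).IsPath := by
    rw [SimpleGraph.Walk.concat_cons] at hp
    exact hp.of_cons
  have hu : SameBlock P u vb → SameBlock P u ub ∧ SameBlock P ub vb :=
    hP.sameBlock_of_mem_support hT.isAcyclic hpath_u (by simp)
  have hv : SameBlock P ub v → SameBlock P ub vb ∧ SameBlock P vb v :=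
    hP.sameBlock_of_mem_support hT.isAcyclic hpath_ub (by simp)
  simp only [multicutVec_top_mk hP.1]
  exact ite_add_ite_le_ite_add_ite (fun h => (hu h).2) (fun h => (hv h).1)
    (fun h h' => (hu h).1.trans hP.1 h')

/-- validity of the intersection inequality for the lifted multicut
polytope of a tree: if `u - ū - ⋯ - v̄ - v` is a path of length at least 3 in the
tree `G`, then every characteristic vector of a multicut of the complete graph lifted
from `G` satisfies `x_{uv} + x_{ū v̄} ≤ x_{u v̄} + x_{ū v}`. -/
theorem tree_intersection_inequality_valid
    {V : Type*} [Fintype V] (G : SimpleGraph V) (hT : G.IsTree)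
    (u ub vb v : V)
    (h1 : G.Adj u ub) (h2 : G.Adj vb v)
    (p : G.Walk ub vb) (hlen : 1 ≤ p.length)
    (hp : ((SimpleGraph.Walk.cons h1 p).concat h2).IsPath)
    (huv : u ≠ v) (h_u_vb : u ≠ vb) (h_ub_v : ub ≠ v) (h_ub_vb : ub ≠ vb) :
    ∀ x ∈ liftedVectors G ⊤,
      x s(u, v) + x s(ub, vb) ≤ x s(u, vb) + x s(ub, v) :=
  tree_intersection_inequality_valid_general G hT u ub vb v h1 h2 p hp
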